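/- For the 2-cocycle formula (1.3): the map ψ(t^α[D]_μ, t^β[D]_ν) = δ_{α,−β}(−1)^μ μ! ν! · binom(α+μ, μ+ν+1) is a 2-cocycle on the Lie algebra W(ℤ,1), i.e., ψ is skew-symmetric and satisfies ψ([x,y],z) + ψ([y,z],x) + ψ([z,x],y) = 0 for x,y,z among the basis elements t^α[D]_μ. -/
import Mathlib


/- The Lie algebra W(ℤ,1) of differential operators on F[t,t⁻¹] (modelled on ℤ →₀ F),
   with basis t^α [D]_μ indexed by (α, μ) ∈ ℤ × ℕ, where [D]_μ = D(D−1)⋯(D−μ+1). -/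

noncomputable section
open Polynomial

variable (F : Type*) [Field F] [CharZero F]

/-- Multiplication by `t^i`. -/
def Tpow (i : ℤ) : Module.End F (ℤ →₀ F) :=
  Finsupp.lsum F fun k => Finsupp.lsingle (k + i)

/-- The degree operator `D = t · d/dt`. -/
def Dop : Module.End F (ℤ →₀ F) :=
  Finsupp.lsum F fun k => (k : F) • Finsupp.lsingle k

/-- The basis element `t^α [D]_μ` of `W(ℤ,1)`, for `x = (α, μ)`. -/
def op (x : ℤ × ℕ) : Module.End F (ℤ →₀ F) :=
  Tpow F x.1 * aeval (Dop F) (descPochhammer F x.2)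

/-- The falling factorial `a(a−1)⋯(a−m+1)` in `F`. -/
def fall (a : F) (m : ℕ) : F := ∏ l ∈ Finset.range m, (a - (l : F))

/-- The generalized binomial coefficient `binom(a,m) = a(a−1)⋯(a−m+1)/m!` in `F`. -/
def bin (a : F) (m : ℕ) : F := fall F a m / (m.factorial : F)

/-- The 2-cocycle `ψ(t^α[D]_μ, t^β[D]_ν) = δ_{α,−β} (−1)^μ μ! ν! binom(α+μ, μ+ν+1)`
on the basis elements. -/
def psi0 (x y : ℤ × ℕ) : F :=
  if x.1 = -y.1 then
    (-1 : F) ^ x.2 * (x.2.factorial : F) * (y.2.factorial : F) *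
      bin F ((x.1 : F) + (x.2 : F)) (x.2 + y.2 + 1)
  else 0

/-- The structure constants of the bracket `[t^α[D]_μ, t^β[D]_ν]` of `W(ℤ,1)`,
expressed in the basis `t^γ[D]_κ` (as a finitely supported family of coefficients). -/
def br (x y : ℤ × ℕ) : (ℤ × ℕ) →₀ F :=
  (∑ l ∈ Finset.range (x.2 + 1),
      ((x.2.choose l : F) * fall F ((y.1 : F) + (y.2 : F)) l) •
        Finsupp.single (x.1 + y.1, x.2 + y.2 - l) (1 : F))
  - (∑ l ∈ Finset.range (y.2 + 1),
      ((y.2.choose l : F) * fall F ((x.1 : F) + (x.2 : F)) l) •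
        Finsupp.single (y.1 + x.1, y.2 + x.2 - l) (1 : F))

set_option linter.unusedSectionVars false
set_option maxHeartbeats 2000000

lemma fall_zero (a : F) : fall F a 0 = 1 := by simp [fall]

lemma fall_succ (a : F) (m : ℕ) : fall F a (m+1) = fall F a m * (a - m) :=
  Finset.prod_range_succ _ m

lemma pascal_sum (n : ℕ) (u : ℕ → F) :
    ∑ l ∈ Finset.range (n+2), ((n+1).choose l : F) * u l
      = ∑ l ∈ Finset.range (n+1), (n.choose l : F) * u l
        + ∑ l ∈ Finset.range (n+1), (n.choose l : F) * u (l+1) := by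
  rw [Finset.sum_range_succ' (fun l => ((n+1).choose l : F) * u l) (n+1)]
  have h1 : ∀ l ∈ Finset.range (n+1),
      ((n+1).choose (l+1) : F) * u (l+1)
        = (n.choose l : F) * u (l+1) + (n.choose (l+1) : F) * u (l+1) := by
    intro l _; rw [Nat.choose_succ_succ]; push_cast; ring
  rw [Finset.sum_congr rfl h1, Finset.sum_add_distrib]
  have h2 : ∑ l ∈ Finset.range (n+1), (n.choose (l+1) : F) * u (l+1)
      + ((n+1).choose 0 : F) * u 0
      = ∑ l ∈ Finset.range (n+1), (n.choose l : F) * u l := by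
    have h3 := Finset.sum_range_succ' (fun l => (n.choose l : F) * u l) (n+1)
    rw [Finset.sum_range_succ (fun l => (n.choose l : F) * u l) (n+1)] at h3
    simp only [Nat.choose_succ_self, Nat.cast_zero, zero_mul, add_zero,
      Nat.choose_zero_right, Nat.cast_one] at h3 ⊢
    rw [← h3]
  rw [add_assoc, h2]; ring

lemma fall_conv (μ ν : ℕ) (a b : F) :
    fall F (a+b) μ * fall F a ν =
      ∑ l ∈ Finset.range (μ+1),
        (μ.choose l : F) * (fall F (b + ν) l * fall F a (μ + ν - l)) := by
  induction μ with
  | zero => simp [fall_zero]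
  | succ μ ih =>
    have key : ∀ l ∈ Finset.range (μ+1),
        ((μ.choose l : F) * (fall F (b + ν) l * fall F a (μ + ν - l))) * (a + b - μ)
          = (μ.choose l : F) * (fall F (b + ν) l * fall F a (μ + 1 + ν - l))
            + (μ.choose l : F) * (fall F (b + ν) (l+1) * fall F a (μ + 1 + ν - (l+1))) := by
      intro l hl
      rw [Finset.mem_range] at hl
      have h1 : μ + 1 + ν - l = (μ + ν - l) + 1 := by omega
      have h2 : μ + 1 + ν - (l+1) = μ + ν - l := by omega
      rw [h1, h2, fall_succ, fall_succ]
      have hcast : ((μ + ν - l : ℕ) : F) = (μ:F) + ν - l := by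
        push_cast [Nat.cast_sub (by omega : l ≤ μ + ν)]; ring
      rw [hcast]; ring
    calc fall F (a+b) (μ+1) * fall F a ν
        = (fall F (a+b) μ * fall F a ν) * (a + b - μ) := by rw [fall_succ]; ring
      _ = ∑ l ∈ Finset.range (μ+1),
            ((μ.choose l : F) * (fall F (b + ν) l * fall F a (μ + ν - l))) * (a + b - μ) := by
          rw [ih, Finset.sum_mul]
      _ = ∑ l ∈ Finset.range (μ+1),
            ((μ.choose l : F) * (fall F (b + ν) l * fall F a (μ + 1 + ν - l))
            + (μ.choose l : F) * (fall F (b + ν) (l+1) * fall F a (μ + 1 + ν - (l+1)))) :=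
          Finset.sum_congr rfl key
      _ = ∑ l ∈ Finset.range (μ+2),
            ((μ+1).choose l : F) * (fall F (b + ν) l * fall F a (μ + 1 + ν - l)) := by
          rw [Finset.sum_add_distrib,
            pascal_sum F μ (fun l => fall F (b + ν) l * fall F a (μ + 1 + ν - l))]

lemma descP_eval (x : F) (μ : ℕ) : (descPochhammer F μ).eval x = fall F x μ := by
  induction μ with
  | zero => simp [fall_zero, descPochhammer_zero]
  | succ n ih => rw [descPochhammer_succ_eval, ih, fall_succ]

lemma Tpow_single (i k : ℤ) (c : F) :
    Tpow F i (Finsupp.single k c) = Finsupp.single (k + i) c := by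
  rw [Tpow, Finsupp.lsum_single, Finsupp.lsingle_apply]

lemma Dop_single (k : ℤ) (c : F) :
    Dop F (Finsupp.single k c) = (k : F) • Finsupp.single k c := by
  rw [Dop, Finsupp.lsum_single, LinearMap.smul_apply, Finsupp.lsingle_apply]

lemma Dop_pow_single (n : ℕ) (k : ℤ) (c : F) :
    (Dop F ^ n) (Finsupp.single k c) = ((k:F)^n) • Finsupp.single k c := by
  induction n with
  | zero => simp
  | succ n ih =>
    rw [pow_succ, Module.End.mul_apply, Dop_single, map_smul, ih, smul_smul, pow_succ]
    ring_nf

lemma aeval_Dop_single (p : F[X]) (k : ℤ) (c : F) :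
    (aeval (Dop F) p) (Finsupp.single k c) = p.eval (k:F) • Finsupp.single k c := by
  induction p using Polynomial.induction_on' with
  | add p q hp hq => rw [map_add, LinearMap.add_apply, hp, hq, eval_add, add_smul]
  | monomial n a =>
    rw [aeval_monomial, Module.End.mul_apply, Dop_pow_single, map_smul,
      Module.algebraMap_end_apply, eval_monomial, smul_smul, mul_comm]

lemma op_single (x : ℤ × ℕ) (k : ℤ) (c : F) :
    op F x (Finsupp.single k c)
      = (fall F (k:F) x.2 * c) • Finsupp.single (k + x.1) 1 := by
  rw [op, Module.End.mul_apply, aeval_Dop_single, descP_eval, map_smul, Tpow_single]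
  rw [show Finsupp.single (k + x.1) c = c • Finsupp.single (k + x.1) (1:F) by
    rw [Finsupp.smul_single, smul_eq_mul, mul_one], smul_smul]

lemma br_sum {V : Type*} [AddCommGroup V] [Module F V] (x y : ℤ × ℕ) (v : ℤ × ℕ → V) :
    (br F x y).sum (fun w c => c • v w)
      = (∑ l ∈ Finset.range (x.2 + 1),
          ((x.2.choose l : F) * fall F ((y.1 : F) + (y.2 : F)) l) • v (x.1 + y.1, x.2 + y.2 - l))
        - ∑ l ∈ Finset.range (y.2 + 1),
          ((y.2.choose l : F) * fall F ((x.1 : F) + (x.2 : F)) l) • v (y.1 + x.1, y.2 + x.2 - l) := by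
  rw [← Finsupp.linearCombination_apply, br, map_sub, map_sum, map_sum]
  simp only [map_smul, Finsupp.linearCombination_single, one_smul]

lemma op_mul_single (x y : ℤ × ℕ) (k : ℤ) (c : F) :
    (op F x * op F y) (Finsupp.single k c)
      = (fall F ((k:F) + (y.1:F)) x.2 * fall F (k:F) y.2 * c) •
          Finsupp.single (k + (x.1 + y.1)) 1 := by
  rw [Module.End.mul_apply, op_single, map_smul, op_single]
  rw [show k + y.1 + x.1 = k + (x.1 + y.1) by ring]
  push_cast
  rw [mul_one, smul_smul]
  ring_nf

lemma half_bracket (x y : ℤ × ℕ) :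
    (∑ l ∈ Finset.range (x.2 + 1),
        ((x.2.choose l : F) * fall F ((y.1 : F) + (y.2 : F)) l) •
          op F (x.1 + y.1, x.2 + y.2 - l))
      = op F x * op F y := by
  apply Finsupp.lhom_ext
  intro k c
  rw [LinearMap.sum_apply, op_mul_single]
  have e : ∀ l ∈ Finset.range (x.2 + 1),
      (((x.2.choose l : F) * fall F ((y.1 : F) + (y.2 : F)) l) • op F (x.1 + y.1, x.2 + y.2 - l))
          (Finsupp.single k c)
        = ((x.2.choose l : F) * (fall F ((y.1:F) + (y.2:F)) l * fall F (k:F) (x.2 + y.2 - l)) * c) •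
            Finsupp.single (k + (x.1 + y.1)) 1 := by
    intro l _
    rw [LinearMap.smul_apply, op_single, smul_smul]
    ring_nf
  rw [Finset.sum_congr rfl e, ← Finset.sum_smul]
  congr 1
  rw [← Finset.sum_mul, ← fall_conv]

lemma part1 (x y : ℤ × ℕ) :
    (br F x y).sum (fun w c => c • op F w) = op F x * op F y - op F y * op F x := by
  rw [br_sum F x y (op F), half_bracket, half_bracket]

lemma fall_reflect (a : F) (m : ℕ) : fall F ((m:F) - 1 - a) m = (-1)^m * fall F a m := by
  rw [fall, fall, ← Finset.prod_range_reflect (fun l => (m:F) - 1 - a - l) m,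
    show ((-1:F)^m) = ∏ _l ∈ Finset.range m, (-1:F) from by simp, ← Finset.prod_mul_distrib]
  refine Finset.prod_congr rfl fun j hj => ?_
  rw [Finset.mem_range] at hj
  have h1 : m - 1 - j = m - (1+j) := by omega
  rw [h1, Nat.cast_sub (by omega : 1 + j ≤ m)]
  push_cast; ring

lemma fall_reflect' (a : F) (m : ℕ) : fall F a m = (-1)^m * fall F ((m:F) - 1 - a) m := by
  have := fall_reflect F ((m:F) - 1 - a) m
  rw [show (m:F) - 1 - ((m:F) - 1 - a) = a from by ring] at this
  exact this

lemma part2 (x y : ℤ × ℕ) : psi0 F x y = - psi0 F y x := by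
  rcases x with ⟨α, μ⟩; rcases y with ⟨β, ν⟩
  by_cases h : α = -β
  · have h' : β = -α := by omega
    rw [psi0, psi0, if_pos h, if_pos (show β = -α from h')]
    simp only [bin]
    rw [show ν + μ + 1 = μ + ν + 1 from by omega]
    rw [show ((β : ℤ) : F) + (ν : F) = ((μ + ν + 1 : ℕ) : F) - 1 - ((α:F) + (μ:F)) from by
      push_cast [h']; ring]
    rw [fall_reflect]
    have hs : (-1:F)^(μ+ν+1) * (-1)^ν = -(-1:F)^μ := by
      rw [← pow_add, show μ+ν+1+ν = 2*ν + (μ + 1) from by omega, pow_add, pow_mul,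
        neg_one_sq, one_pow, one_mul, pow_succ]
      ring
    rw [div_eq_mul_inv, div_eq_mul_inv]
    linear_combination ((μ.factorial : F) * (ν.factorial : F) * fall F ((α:F)+(μ:F)) (μ+ν+1)
      * (((μ+ν+1).factorial : F))⁻¹) * hs
  · rw [psi0, psi0, if_neg h, if_neg (fun hc => h (by omega)), neg_zero]

lemma choose_conv (μ ν : ℕ) : ∀ M : ℕ,
    ∑ i ∈ Finset.range (M+1), (M-i).choose μ * i.choose ν = (M+1).choose (μ+ν+1) := by
  induction μ with
  | zero =>
    intro M
    simp only [Nat.choose_zero_right, one_mul, Nat.zero_add]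
    rcases lt_or_ge M ν with h | h
    · rw [Finset.sum_eq_zero, eq_comm, Nat.choose_eq_zero_of_lt (by omega)]
      intro i hi; rw [Finset.mem_range] at hi
      exact Nat.choose_eq_zero_of_lt (by omega)
    · rw [Finset.range_eq_Ico, Finset.Ico_add_one_right_eq_Icc, ← Nat.sum_Icc_choose M ν]
      refine (Finset.sum_subset ?_ ?_).symm
      · intro i hi; simp only [Finset.mem_Icc] at hi ⊢; omega
      · intro i hi hni
        simp only [Finset.mem_Icc] at hi hni
        exact Nat.choose_eq_zero_of_lt (by omega)
  | succ μ ih =>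
    intro M
    induction M with
    | zero => simp [Nat.choose_eq_zero_of_lt]
    | succ M ihM =>
      rw [show μ + 1 + ν + 1 = μ + ν + 1 + 1 from by omega] at ihM ⊢
      rw [Finset.sum_range_succ, Nat.sub_self,
        show Nat.choose 0 (μ+1) = 0 from Nat.choose_eq_zero_of_lt (by omega), zero_mul, add_zero]
      have e : ∀ i ∈ Finset.range (M+1),
          (M + 1 - i).choose (μ+1) * i.choose ν
            = (M-i).choose μ * i.choose ν + (M-i).choose (μ+1) * i.choose ν := by
        intro i hi; rw [Finset.mem_range] at hi
        rw [show M + 1 - i = (M - i) + 1 from by omega, Nat.choose_succ_succ, add_mul]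
      rw [Finset.sum_congr rfl e, Finset.sum_add_distrib, ih M, ihM]
      exact (Nat.choose_succ_succ (M+1) (μ+ν+1)).symm

/-! ### Window-sum representation of the cocycle -/

def ind (j : ℤ) : F := if 0 ≤ j then 1 else 0

lemma ind_congr {a b : ℤ} (h : 0 ≤ a ↔ 0 ≤ b) : ind F a = ind F b := by
  rw [ind, ind, if_congr h rfl rfl]

def psiSum (α : ℤ) (μ ν : ℕ) (M : ℤ) : F :=
  ∑ j ∈ Finset.Icc (-M) M,
    fall F ((j:ℤ) : F) μ * fall F ((j+α : ℤ) : F) ν * (ind F (j+α) - ind F j)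

lemma sum_shift (G : ℤ → F) (N c M : ℤ)
    (hsupp : ∀ j : ℤ, j ∉ Finset.Icc (-N) N → G j = 0) (hM : N + |c| ≤ M) :
    ∑ j ∈ Finset.Icc (-M) M, G (j + c) = ∑ j ∈ Finset.Icc (-M) M, G j := by
  have habs1 := le_abs_self c
  have habs2 := neg_abs_le c
  have habs3 := abs_nonneg c
  have e1 : ∑ j ∈ Finset.Icc (-M) M, G (j + c) = ∑ j ∈ Finset.Icc (-M + c) (M + c), G j := by
    rw [← Finset.map_add_right_Icc, Finset.sum_map]
    rfl
  rw [e1]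
  have e2 : ∑ j ∈ Finset.Icc (-M + c) (M + c), G j = ∑ j ∈ Finset.Icc (-N) N, G j := by
    refine (Finset.sum_subset ?_ ?_).symm
    · intro j hj; simp only [Finset.mem_Icc] at hj ⊢; omega
    · intro j _ hj; exact hsupp j hj
  have e3 : ∑ j ∈ Finset.Icc (-M) M, G j = ∑ j ∈ Finset.Icc (-N) N, G j := by
    refine (Finset.sum_subset ?_ ?_).symm
    · intro j hj; simp only [Finset.mem_Icc] at hj ⊢; omega
    · intro j _ hj; exact hsupp j hj
  rw [e2, e3]

lemma fall_natCast (n m : ℕ) : fall F ((n:ℕ) : F) m = ((n.descFactorial m : ℕ) : F) := by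
  rw [← descP_eval, descPochhammer_eval_eq_descFactorial]

lemma bin_natCast (n m : ℕ) : bin F ((n:ℕ) : F) m = ((n.choose m : ℕ) : F) := by
  rw [bin, fall_natCast, Nat.descFactorial_eq_factorial_mul_choose]
  push_cast
  rw [mul_comm, mul_div_assoc, div_self (by exact_mod_cast m.factorial_ne_zero), mul_one]

lemma window_sum (n μ ν : ℕ) (hn : 1 ≤ n) :
    ∑ i ∈ Finset.range n, fall F ((i:F) - (n:F)) μ * fall F (i:F) ν
      = (-1:F)^μ * (μ.factorial : F) * (ν.factorial : F) * bin F ((n:F)+(μ:F)) (μ+ν+1) := by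
  have e : ∀ i ∈ Finset.range n, fall F ((i:F)-(n:F)) μ * fall F (i:F) ν
      = (-1:F)^μ * ((((n+μ-1-i).descFactorial μ * i.descFactorial ν : ℕ)) : F) := by
    intro i hi; rw [Finset.mem_range] at hi
    rw [fall_reflect' F ((i:F)-(n:F)) μ]
    rw [show (μ:F) - 1 - ((i:F)-(n:F)) = ((n+μ-1-i : ℕ) : F) from by
      rw [Nat.cast_sub (by omega : i ≤ n + μ - 1), Nat.cast_sub (by omega : 1 ≤ n + μ)]
      push_cast; ring]
    rw [fall_natCast, fall_natCast]
    push_cast; ring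
  rw [Finset.sum_congr rfl e, ← Finset.mul_sum, ← Nat.cast_sum]
  have hext : ∑ i ∈ Finset.range n, (n+μ-1-i).descFactorial μ * i.descFactorial ν
      = ∑ i ∈ Finset.range (n+μ), (n+μ-1-i).descFactorial μ * i.descFactorial ν := by
    refine Finset.sum_subset ?_ ?_
    · intro i hi; simp only [Finset.mem_range] at hi ⊢; omega
    · intro i hi hni
      simp only [Finset.mem_range] at hi hni
      rw [Nat.descFactorial_eq_zero_iff_lt.mpr (by omega), zero_mul]
  have hval : ∑ i ∈ Finset.range (n+μ), (n+μ-1-i).descFactorial μ * i.descFactorial ν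
      = μ.factorial * ν.factorial * (n+μ).choose (μ+ν+1) := by
    have e2 : ∀ i ∈ Finset.range (n+μ), (n+μ-1-i).descFactorial μ * i.descFactorial ν
        = μ.factorial * ν.factorial * ((n+μ-1-i).choose μ * i.choose ν) := by
      intro i _
      rw [Nat.descFactorial_eq_factorial_mul_choose, Nat.descFactorial_eq_factorial_mul_choose]
      ring
    rw [Finset.sum_congr rfl e2, ← Finset.mul_sum]
    have := choose_conv μ ν (n+μ-1)
    rw [show n + μ - 1 + 1 = n + μ from by omega] at this
    rw [this]
  rw [hext, hval]
  rw [show ((n:F) + (μ:F)) = (((n+μ : ℕ) : ℕ) : F) from by push_cast; ring, bin_natCast]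
  push_cast; ring

lemma psi0_eq_psiSum (x y : ℤ × ℕ) (h : x.1 + y.1 = 0) (M : ℤ) (hM : 2*|x.1| ≤ M) :
    psi0 F x y = psiSum F x.1 x.2 y.2 M := by
  rcases x with ⟨α, μ⟩; rcases y with ⟨β, ν⟩
  simp only at h hM ⊢
  -- main case : α ≥ 1
  have main : ∀ (α' : ℤ) (μ' ν' : ℕ) (hpos : 1 ≤ α') (hM' : α' ≤ M),
      psiSum F α' μ' ν' M
        = (-1:F)^μ' * (μ'.factorial : F) * (ν'.factorial : F) *
            bin F ((α':F)+(μ':F)) (μ'+ν'+1) := by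
    intro α' μ' ν' hpos hM'
    have hM0 : (0:ℤ) ≤ M := by omega
    rw [psiSum]
    rw [show ∑ j ∈ Finset.Icc (-M) M,
          fall F ((j:ℤ):F) μ' * fall F ((j+α' : ℤ):F) ν' * (ind F (j+α') - ind F j)
        = ∑ j ∈ Finset.Icc (-α') (-1 : ℤ),
          fall F ((j:ℤ):F) μ' * fall F ((j+α' : ℤ):F) ν' * (ind F (j+α') - ind F j) from by
      refine (Finset.sum_subset ?_ ?_).symm
      · intro j hj; simp only [Finset.mem_Icc] at hj ⊢; omega
      · intro j hj hnj
        simp only [Finset.mem_Icc, not_and_or, not_le] at hj hnj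
        rw [ind_congr F (show (0 ≤ j + α') ↔ (0 ≤ j) from by omega), sub_self, mul_zero]]
    have hbij : ∑ j ∈ Finset.Icc (-α') (-1 : ℤ),
          fall F ((j:ℤ):F) μ' * fall F ((j+α' : ℤ):F) ν' * (ind F (j+α') - ind F j)
        = ∑ i ∈ Finset.range α'.toNat,
          fall F ((i:F) - (α'.toNat : F)) μ' * fall F (i:F) ν' := by
      refine Finset.sum_nbij' (fun j => (j + α').toNat) (fun i => (i : ℤ) - α') ?_ ?_ ?_ ?_ ?_
      · intro j hj; simp only [Finset.mem_Icc] at hj; simp only [Finset.mem_range]; omega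
      · intro i hi; simp only [Finset.mem_range] at hi; simp only [Finset.mem_Icc]; omega
      · intro j hj; simp only [Finset.mem_Icc] at hj; omega
      · intro i hi; simp only [Finset.mem_range] at hi; omega
      · intro j hj
        simp only [Finset.mem_Icc] at hj
        have h1 : ind F (j + α') = 1 := by rw [ind, if_pos (by omega)]
        have h2 : ind F j = 0 := by rw [ind, if_neg (by omega)]
        have e1 : (((j + α').toNat : ℕ) : ℤ) = j + α' := Int.toNat_of_nonneg (by omega)
        have e2 : ((α'.toNat : ℕ) : ℤ) = α' := Int.toNat_of_nonneg (by omega)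
        have h4 : ((((j + α').toNat : ℕ)) : F) = ((j + α' : ℤ) : F) := by
          rw [← Int.cast_natCast, e1]
        have h5 : ((α'.toNat : ℕ) : F) = ((α' : ℤ) : F) := by
          rw [← Int.cast_natCast, e2]
        have h3 : ((((j + α').toNat : ℕ)) : F) - ((α'.toNat : ℕ) : F) = ((j:ℤ) : F) := by
          rw [h4, h5]; push_cast; ring
        rw [h1, h2, h3, h4]
        ring
    rw [hbij, window_sum F α'.toNat μ' ν' (by omega)]
    have e2 : ((α'.toNat : ℕ) : F) = ((α' : ℤ) : F) := by
      exact_mod_cast congrArg (fun t : ℤ => (t : F)) (Int.toNat_of_nonneg (by omega : (0:ℤ) ≤ α'))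
    rw [e2]
  have habs := abs_nonneg α
  rcases lt_trichotomy α 0 with hneg | hzero | hpos
  · -- α < 0 : use skew-symmetry on both sides
    have hy : β = -α := by omega
    have h1 : psi0 F (α, μ) (β, ν) = - psi0 F (β, ν) (α, μ) := part2 F _ _
    have h2 : psi0 F (β, ν) (α, μ) = psiSum F β ν μ M := by
      have := main β ν μ (by omega) (by
        have : |α| = -α := abs_of_neg hneg
        omega)
      rw [psi0, if_pos (by omega : β = -α), this]
    -- now show psiSum F β ν μ M = - psiSum F α μ ν M
    have h3 : psiSum F β ν μ M = - psiSum F α μ ν M := by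
      rw [psiSum, psiSum, ← Finset.sum_neg_distrib]
      have hshift := sum_shift F
        (fun j => -(fall F ((j:ℤ):F) μ * fall F ((j+α : ℤ):F) ν * (ind F (j+α) - ind F j)))
        (|α|) (-α) M
        (by
          intro j hj
          simp only [Finset.mem_Icc, not_and_or, not_le] at hj
          have h4 := le_abs_self α; have h5 := neg_abs_le α
          rw [ind_congr F (show (0 ≤ j + α) ↔ (0 ≤ j) from by omega), sub_self, mul_zero, neg_zero])
        (by rw [abs_neg]; omega)
      rw [← hshift]
      refine Finset.sum_congr rfl fun j _ => ?_
      rw [show j + -α + α = j from by ring, show j + -α = j + β from by omega]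
      ring
    rw [h1, h2, h3, neg_neg]
  · -- α = 0
    subst hzero
    rw [psi0, if_pos (by omega : (0:ℤ) = -β)]
    have hz : bin F (((0:ℤ):F) + (μ:F)) (μ + ν + 1) = 0 := by
      rw [show (((0:ℤ):F) + (μ:F)) = ((μ:ℕ) : F) from by push_cast; ring, bin,
        fall_natCast, Nat.descFactorial_eq_zero_iff_lt.mpr (by omega), Nat.cast_zero, zero_div]
    rw [hz, mul_zero, psiSum]
    rw [eq_comm, Finset.sum_eq_zero]
    intro j _
    rw [show j + (0:ℤ) = j from by ring, sub_self, mul_zero]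
  · -- α > 0
    have ha : |α| = α := abs_of_pos hpos
    rw [psi0, if_pos (by omega : α = -β), main α μ ν (by omega) (by omega)]
-- appended part: br_psi etc. (checked together with full.lean content)
lemma smul_eq_mul_sum (x y z : ℤ × ℕ) :
    (br F x y).sum (fun w c => c * psi0 F w z)
      = (br F x y).sum (fun w c => c • psi0 F w z) := rfl

lemma half_psi (α β γ : ℤ) (μ ν lam : ℕ) (h : α + β + γ = 0) (M : ℤ)
    (hM : 2*|α+β| ≤ M) :
    (∑ l ∈ Finset.range (μ + 1),
        ((μ.choose l : F) * fall F ((β : F) + (ν : F)) l) •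
          psi0 F (α + β, μ + ν - l) (γ, lam))
      = ∑ j ∈ Finset.Icc (-M) M,
          fall F ((j+β : ℤ):F) μ * fall F ((j:ℤ):F) ν *
            (fall F ((j+(α+β) : ℤ):F) lam * (ind F (j+(α+β)) - ind F j)) := by
  have e1 : ∀ l ∈ Finset.range (μ+1),
      ((μ.choose l : F) * fall F ((β : F) + (ν : F)) l) •
          psi0 F (α + β, μ + ν - l) (γ, lam)
        = ∑ j ∈ Finset.Icc (-M) M,
            ((μ.choose l : F) * (fall F ((β : F) + (ν : F)) l * fall F ((j:ℤ):F) (μ + ν - l)))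
              * (fall F ((j+(α+β) : ℤ):F) lam * (ind F (j+(α+β)) - ind F j)) := by
    intro l _
    rw [psi0_eq_psiSum F (α + β, μ + ν - l) (γ, lam) (by simp only; omega) M (by simpa using hM)]
    rw [psiSum, smul_eq_mul, Finset.mul_sum]
    refine Finset.sum_congr rfl fun j _ => ?_
    ring
  rw [Finset.sum_congr rfl e1, Finset.sum_comm]
  refine Finset.sum_congr rfl fun j _ => ?_
  rw [← Finset.sum_mul, ← fall_conv F μ ν ((j:ℤ):F) ((β:ℤ):F)]
  rw [show ((j+β : ℤ):F) = ((j:ℤ):F) + ((β:ℤ):F) from by push_cast; ring]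

lemma br_psi (α β γ : ℤ) (μ ν lam : ℕ) (h : α + β + γ = 0) (M : ℤ)
    (hM : 2*|α+β| ≤ M) :
    (br F (α,μ) (β,ν)).sum (fun w c => c * psi0 F w (γ,lam))
      = ∑ j ∈ Finset.Icc (-M) M,
          (fall F ((j+β : ℤ):F) μ * fall F ((j:ℤ):F) ν
            - fall F ((j+α : ℤ):F) ν * fall F ((j:ℤ):F) μ)
            * (fall F ((j+(α+β) : ℤ):F) lam * (ind F (j+(α+β)) - ind F j)) := by
  rw [smul_eq_mul_sum, br_sum F (α,μ) (β,ν) (fun w => psi0 F w (γ,lam))]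
  have h1 := half_psi F α β γ μ ν lam h M hM
  have h2 := half_psi F β α γ ν μ lam (by omega) M (by rw [show β + α = α + β from by ring]; exact hM)
  simp only at h1 h2 ⊢
  rw [h1, h2, ← Finset.sum_sub_distrib]
  refine Finset.sum_congr rfl fun j _ => ?_
  rw [show β + α = α + β from by ring]
  ring

lemma br_psi_ne (x y z : ℤ × ℕ) (h : x.1 + y.1 + z.1 ≠ 0) :
    (br F x y).sum (fun w c => c * psi0 F w z) = 0 := by
  rw [smul_eq_mul_sum, br_sum F x y (fun w => psi0 F w z)]
  have z1 : ∀ l ∈ Finset.range (x.2+1),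
      ((x.2.choose l : F) * fall F ((y.1 : F) + (y.2 : F)) l) •
        psi0 F (x.1 + y.1, x.2 + y.2 - l) z = 0 := by
    intro l _
    rw [psi0, if_neg (by simp only; omega), smul_zero]
  have z2 : ∀ l ∈ Finset.range (y.2+1),
      ((y.2.choose l : F) * fall F ((x.1 : F) + (x.2 : F)) l) •
        psi0 F (y.1 + x.1, y.2 + x.2 - l) z = 0 := by
    intro l _
    rw [psi0, if_neg (by simp only; omega), smul_zero]
  rw [Finset.sum_congr rfl z1, Finset.sum_congr rfl z2, Finset.sum_const_zero,
    Finset.sum_const_zero, sub_zero]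

lemma part3 (x y z : ℤ × ℕ) :
    (br F x y).sum (fun w c => c * psi0 F w z)
      + (br F y z).sum (fun w c => c * psi0 F w x)
      + (br F z x).sum (fun w c => c * psi0 F w y) = 0 := by
  rcases x with ⟨α, μ⟩; rcases y with ⟨β, ν⟩; rcases z with ⟨γ, lam⟩
  by_cases h : α + β + γ = 0
  case neg =>
    rw [br_psi_ne F _ _ _ (by simp only; omega), br_psi_ne F _ _ _ (by simp only; omega),
      br_psi_ne F _ _ _ (by simp only; omega)]
    ring
  case pos =>
  have ha1 := le_abs_self α; have ha2 := neg_abs_le α; have ha3 := abs_nonneg α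
  have hb1 := le_abs_self β; have hb2 := neg_abs_le β; have hb3 := abs_nonneg β
  have hc1 := le_abs_self γ; have hc2 := neg_abs_le γ; have hc3 := abs_nonneg γ
  have hab := abs_add_le α β; have hbc := abs_add_le β γ; have hca := abs_add_le γ α
  set N : ℤ := |α| + |β| + |γ| with hN
  set M : ℤ := 2*N with hMdef
  set S : Finset ℤ := Finset.Icc (-M) M with hS
  rw [br_psi F α β γ μ ν lam h M (by omega),
      br_psi F β γ α ν lam μ (by omega) M (by omega),
      br_psi F γ α β lam μ ν (by omega) M (by omega)]
  -- names for the six canonical summands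
  -- Split and normalize term A
  have eA : (∑ j ∈ S, (fall F ((j+β : ℤ):F) μ * fall F ((j:ℤ):F) ν
        - fall F ((j+α : ℤ):F) ν * fall F ((j:ℤ):F) μ)
        * (fall F ((j+(α+β) : ℤ):F) lam * (ind F (j+(α+β)) - ind F j)))
      = (∑ j ∈ S, fall F ((j+β : ℤ):F) μ * fall F ((j:ℤ):F) ν
            * fall F ((j-γ : ℤ):F) lam * (ind F (j-γ) - ind F j))
        - ∑ j ∈ S, fall F ((j+α : ℤ):F) ν * fall F ((j:ℤ):F) μ
            * fall F ((j-γ : ℤ):F) lam * (ind F (j-γ) - ind F j) := by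
    rw [← Finset.sum_sub_distrib]
    refine Finset.sum_congr rfl fun j _ => ?_
    rw [show j + (α+β) = j - γ from by omega]
    ring
  have hA2 : (∑ j ∈ S, fall F ((j+α : ℤ):F) ν * fall F ((j:ℤ):F) μ
        * fall F ((j-γ : ℤ):F) lam * (ind F (j-γ) - ind F j))
      = ∑ j ∈ S, fall F ((j-α : ℤ):F) μ * fall F ((j:ℤ):F) ν
        * fall F ((j+β : ℤ):F) lam * (ind F (j+β) - ind F (j-α)) := by
    have hs := sum_shift F (fun j => fall F ((j-α : ℤ):F) μ * fall F ((j:ℤ):F) ν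
        * fall F ((j+β : ℤ):F) lam * (ind F (j+β) - ind F (j-α))) N α M
      (by
        intro j hj
        simp only [Finset.mem_Icc, not_and_or, not_le] at hj
        rw [ind_congr F (show (0 ≤ j + β) ↔ (0 ≤ j - α) from by omega), sub_self, mul_zero])
      (by omega)
    rw [← hs]
    refine Finset.sum_congr rfl fun j _ => ?_
    rw [show j + α - α = j from by ring, show j + α + β = j - γ from by omega]
    ring
  -- Split and normalize term B
  have eB : (∑ j ∈ S, (fall F ((j+γ : ℤ):F) ν * fall F ((j:ℤ):F) lam
        - fall F ((j+β : ℤ):F) lam * fall F ((j:ℤ):F) ν)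
        * (fall F ((j+(β+γ) : ℤ):F) μ * (ind F (j+(β+γ)) - ind F j)))
      = (∑ j ∈ S, fall F ((j+γ : ℤ):F) ν * fall F ((j:ℤ):F) lam
            * fall F ((j-α : ℤ):F) μ * (ind F (j-α) - ind F j))
        - ∑ j ∈ S, fall F ((j-α : ℤ):F) μ * fall F ((j:ℤ):F) ν
            * fall F ((j+β : ℤ):F) lam * (ind F (j-α) - ind F j) := by
    rw [← Finset.sum_sub_distrib]
    refine Finset.sum_congr rfl fun j _ => ?_
    rw [show j + (β+γ) = j - α from by omega]
    ring
  have hB1 : (∑ j ∈ S, fall F ((j+γ : ℤ):F) ν * fall F ((j:ℤ):F) lam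
        * fall F ((j-α : ℤ):F) μ * (ind F (j-α) - ind F j))
      = ∑ j ∈ S, fall F ((j+β : ℤ):F) μ * fall F ((j:ℤ):F) ν
        * fall F ((j-γ : ℤ):F) lam * (ind F (j+β) - ind F (j-γ)) := by
    have hs := sum_shift F (fun j => fall F ((j+β : ℤ):F) μ * fall F ((j:ℤ):F) ν
        * fall F ((j-γ : ℤ):F) lam * (ind F (j+β) - ind F (j-γ))) N γ M
      (by
        intro j hj
        simp only [Finset.mem_Icc, not_and_or, not_le] at hj
        rw [ind_congr F (show (0 ≤ j + β) ↔ (0 ≤ j - γ) from by omega), sub_self, mul_zero])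
      (by omega)
    rw [← hs]
    refine Finset.sum_congr rfl fun j _ => ?_
    rw [show j + γ - γ = j from by ring, show j + γ + β = j - α from by omega]
    ring
  -- Split and normalize term C
  have eC : (∑ j ∈ S, (fall F ((j+α : ℤ):F) lam * fall F ((j:ℤ):F) μ
        - fall F ((j+γ : ℤ):F) μ * fall F ((j:ℤ):F) lam)
        * (fall F ((j+(γ+α) : ℤ):F) ν * (ind F (j+(γ+α)) - ind F j)))
      = (∑ j ∈ S, fall F ((j+α : ℤ):F) lam * fall F ((j:ℤ):F) μ
            * fall F ((j-β : ℤ):F) ν * (ind F (j-β) - ind F j))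
        - ∑ j ∈ S, fall F ((j+γ : ℤ):F) μ * fall F ((j:ℤ):F) lam
            * fall F ((j-β : ℤ):F) ν * (ind F (j-β) - ind F j) := by
    rw [← Finset.sum_sub_distrib]
    refine Finset.sum_congr rfl fun j _ => ?_
    rw [show j + (γ+α) = j - β from by omega]
    ring
  have hC1 : (∑ j ∈ S, fall F ((j+α : ℤ):F) lam * fall F ((j:ℤ):F) μ
        * fall F ((j-β : ℤ):F) ν * (ind F (j-β) - ind F j))
      = ∑ j ∈ S, fall F ((j+β : ℤ):F) μ * fall F ((j:ℤ):F) ν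
        * fall F ((j-γ : ℤ):F) lam * (ind F j - ind F (j+β)) := by
    have hs := sum_shift F (fun j => fall F ((j+β : ℤ):F) μ * fall F ((j:ℤ):F) ν
        * fall F ((j-γ : ℤ):F) lam * (ind F j - ind F (j+β))) N (-β) M
      (by
        intro j hj
        simp only [Finset.mem_Icc, not_and_or, not_le] at hj
        rw [ind_congr F (show (0 ≤ j) ↔ (0 ≤ j + β) from by omega), sub_self, mul_zero])
      (by rw [abs_neg]; omega)
    rw [← hs]
    refine Finset.sum_congr rfl fun j _ => ?_
    rw [show j + -β + β = j from by ring, show j + -β - γ = j + α from by omega,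
      show j + -β = j - β from by ring]
    ring
  have hC2 : (∑ j ∈ S, fall F ((j+γ : ℤ):F) μ * fall F ((j:ℤ):F) lam
        * fall F ((j-β : ℤ):F) ν * (ind F (j-β) - ind F j))
      = ∑ j ∈ S, fall F ((j-α : ℤ):F) μ * fall F ((j:ℤ):F) ν
        * fall F ((j+β : ℤ):F) lam * (ind F j - ind F (j+β)) := by
    have hs := sum_shift F (fun j => fall F ((j-α : ℤ):F) μ * fall F ((j:ℤ):F) ν
        * fall F ((j+β : ℤ):F) lam * (ind F j - ind F (j+β))) N (-β) M
      (by
        intro j hj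
        simp only [Finset.mem_Icc, not_and_or, not_le] at hj
        rw [ind_congr F (show (0 ≤ j) ↔ (0 ≤ j + β) from by omega), sub_self, mul_zero])
      (by rw [abs_neg]; omega)
    rw [← hs]
    refine Finset.sum_congr rfl fun j _ => ?_
    rw [show j + -β + β = j from by ring, show j + -β - α = j + γ from by omega,
      show j + -β = j - β from by ring]
    ring
  rw [eA, hA2, eB, hB1, eC, hC1, hC2]
  rw [sub_add_sub_comm, sub_add_sub_comm]
  rw [← Finset.sum_add_distrib, ← Finset.sum_add_distrib,
    ← Finset.sum_add_distrib, ← Finset.sum_add_distrib, ← Finset.sum_sub_distrib]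
  rw [Finset.sum_eq_zero]
  intro j _
  ring

/-- `ψ` is a 2-cocycle on `W(ℤ,1)`: the structure constants `br` indeed express the
operator commutator, `ψ` is skew-symmetric on basis elements, and the (bilinearly
extended) cocycle identity `ψ([x,y],z) + ψ([y,z],x) + ψ([z,x],y) = 0` holds. -/
theorem psi_is_two_cocycle :
    (∀ x y : ℤ × ℕ, (br F x y).sum (fun w c => c • op F w)
        = op F x * op F y - op F y * op F x) ∧
    (∀ x y : ℤ × ℕ, psi0 F x y = -psi0 F y x) ∧
    (∀ x y z : ℤ × ℕ,
      (br F x y).sum (fun w c => c * psi0 F w z)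
        + (br F y z).sum (fun w c => c * psi0 F w x)
        + (br F z x).sum (fun w c => c * psi0 F w y) = 0) :=
  ⟨part1 F, part2 F, part3 F⟩
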